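/- arXiv:math/0402294 — 3 statements merged into one kernel-verified Lean document; each statement's English description precedes it below -/
import Mathlib

section
/- For any orthonormal vectors v₁, v₂, v₃, v₄ ∈ V one has |e*(v₁, v₂, v₃, v₄)| ≤ 3/(2π²). (Equivalently: the value of the Euler form e(Ω*) on any decomposable unit 4-vector tangent to the Grassmannian G_o(4,8) is at most 3/(2π²).) -/
/-!
For `k, l` let `β_{kl} ∈ Λ²ℝ⁴ ≅ ℝ⁶` be the bivector `(Ω*_{kl}(v_a, v_b))_{a<b}`. Then
`(Ω*_{kl} ∧ Ω*_{mn})(v₀, v₁, v₂, v₃) = ⟪β_{kl}, ⋆β_{mn}⟫ ≤ ‖β_{kl}‖ ‖β_{mn}‖`.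
Since `β_{kl} = ∑ᵢ xᵢ ∧ yᵢ` with `xᵢ = (v_a(i, k))_a` and `yᵢ = (v_a(i, l))_a`, the inequality
`‖x ∧ y‖ ≤ ‖x‖ ‖y‖` and Cauchy–Schwarz give `‖β_{kl}‖ ≤ √(S_k S_l)`, where `S_k` is the total
squared mass of column `k` in `v₀, …, v₃`. The masses add up to `4` because the `v_a` are unit
vectors, so AM–GM gives `S₀ S₁ S₂ S₃ ≤ 1`: each of the three wedge terms of `e*` is at most `1`
in absolute value.
-/

/-- `Ω* k l (X, Y) = ∑_{i=1}^{4} (X_{ik} Y_{il} − X_{il} Y_{ik})`. -/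
noncomputable def Omst (k l : Fin 4) (X Y : Fin 4 → Fin 4 → ℝ) : ℝ :=
  ∑ i : Fin 4, (X i k * Y i l - X i l * Y i k)

/-- The wedge of two alternating 2-forms, shuffle convention (six (2,2)-shuffles). -/
noncomputable def w22 (f g : (Fin 4 → Fin 4 → ℝ) → (Fin 4 → Fin 4 → ℝ) → ℝ)
    (x₁ x₂ x₃ x₄ : Fin 4 → Fin 4 → ℝ) : ℝ :=
  f x₁ x₂ * g x₃ x₄ - f x₁ x₃ * g x₂ x₄ + f x₁ x₄ * g x₂ x₃
    + f x₂ x₃ * g x₁ x₄ - f x₂ x₄ * g x₁ x₃ + f x₃ x₄ * g x₁ x₂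

/-- `e* = (1/(2π²)) (Ω*₁₂ ∧ Ω*₃₄ − Ω*₁₃ ∧ Ω*₂₄ + Ω*₁₄ ∧ Ω*₂₃)` (0-indexed). -/
noncomputable def estar (x₁ x₂ x₃ x₄ : Fin 4 → Fin 4 → ℝ) : ℝ :=
  (1 / (2 * Real.pi ^ 2)) *
    (w22 (Omst 0 1) (Omst 2 3) x₁ x₂ x₃ x₄
      - w22 (Omst 0 2) (Omst 1 3) x₁ x₂ x₃ x₄
      + w22 (Omst 0 3) (Omst 1 2) x₁ x₂ x₃ x₄)

open Real

def wedge (x y : EuclideanSpace ℝ (Fin 4)) : EuclideanSpace ℝ (Fin 6) :=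
  !₂[x 0 * y 1 - x 1 * y 0, x 0 * y 2 - x 2 * y 0, x 0 * y 3 - x 3 * y 0,
    x 1 * y 2 - x 2 * y 1, x 1 * y 3 - x 3 * y 1, x 2 * y 3 - x 3 * y 2]

theorem norm_wedge_le (x y : EuclideanSpace ℝ (Fin 4)) : ‖wedge x y‖ ≤ ‖x‖ * ‖y‖ := by
  have lagrange : ‖wedge x y‖ ^ 2 = ‖x‖ ^ 2 * ‖y‖ ^ 2 - (∑ i, x i * y i) ^ 2 := by
    simp only [EuclideanSpace.real_norm_sq_eq, Fin.sum_univ_four, Fin.sum_univ_six, wedge,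
      Matrix.cons_val_zero, Matrix.cons_val_one, Matrix.cons_val]
    ring
  refine pow_le_pow_iff_left₀ (norm_nonneg _) (by positivity) two_ne_zero |>.mp ?_
  nlinarith [sq_nonneg (∑ i, x i * y i)]

def hodgeStar (u : EuclideanSpace ℝ (Fin 6)) : EuclideanSpace ℝ (Fin 6) :=
  !₂[u 5, -u 4, u 3, u 2, -u 1, u 0]

theorem norm_hodgeStar (u : EuclideanSpace ℝ (Fin 6)) : ‖hodgeStar u‖ = ‖u‖ := by
  simp only [EuclideanSpace.norm_eq, Fin.sum_univ_six, hodgeStar, Matrix.cons_val_zero,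
    Matrix.cons_val_one, Matrix.cons_val, norm_neg]
  ring_nf

def bivector {α : Type*} (f : α → α → ℝ) (v : Fin 4 → α) : EuclideanSpace ℝ (Fin 6) :=
  !₂[f (v 0) (v 1), f (v 0) (v 2), f (v 0) (v 3), f (v 1) (v 2), f (v 1) (v 3), f (v 2) (v 3)]

theorem w22_eq_inner_hodgeStar (f g : (Fin 4 → Fin 4 → ℝ) → (Fin 4 → Fin 4 → ℝ) → ℝ)
    (v : Fin 4 → Fin 4 → Fin 4 → ℝ) :
    w22 f g (v 0) (v 1) (v 2) (v 3) = inner ℝ (bivector f v) (hodgeStar (bivector g v)) := by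
  simp only [w22, bivector, hodgeStar, PiLp.inner_apply, RCLike.inner_apply, ringHom_apply,
    Fin.sum_univ_six, Matrix.cons_val_zero, Matrix.cons_val_one, Matrix.cons_val]
  ring

theorem abs_w22_le (f g : (Fin 4 → Fin 4 → ℝ) → (Fin 4 → Fin 4 → ℝ) → ℝ)
    (v : Fin 4 → Fin 4 → Fin 4 → ℝ) :
    |w22 f g (v 0) (v 1) (v 2) (v 3)| ≤ ‖bivector f v‖ * ‖bivector g v‖ := by
  rw [w22_eq_inner_hodgeStar, ← norm_hodgeStar (bivector g v)]
  exact abs_real_inner_le_norm _ _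

theorem bivector_Omst (k l : Fin 4) (v : Fin 4 → Fin 4 → Fin 4 → ℝ) :
    bivector (Omst k l) v =
      ∑ i, wedge (WithLp.toLp 2 fun a => v a i k) (WithLp.toLp 2 fun a => v a i l) := by
  ext j
  fin_cases j <;> simp [bivector, wedge, Omst, mul_comm]

def columnMass (v : Fin 4 → Fin 4 → Fin 4 → ℝ) (k : Fin 4) : ℝ := ∑ a, ∑ i, v a i k ^ 2

theorem norm_bivector_Omst_le (k l : Fin 4) (v : Fin 4 → Fin 4 → Fin 4 → ℝ) :
    ‖bivector (Omst k l) v‖ ≤ √(columnMass v k) * √(columnMass v l) := by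
  have norm_column (k i : Fin 4) : ‖(WithLp.toLp 2 fun a => v a i k : EuclideanSpace ℝ (Fin 4))‖
      = √(∑ a, v a i k ^ 2) := by
    simp [EuclideanSpace.norm_eq]
  have mass (k : Fin 4) : columnMass v k = ∑ i, (√(∑ a, v a i k ^ 2)) ^ 2 := by
    rw [columnMass, Finset.sum_comm]
    exact Finset.sum_congr rfl fun i _ => (sq_sqrt (by positivity)).symm
  rw [bivector_Omst, mass k, mass l]
  calc _ ≤ ∑ i, ‖wedge (WithLp.toLp 2 fun a => v a i k) (WithLp.toLp 2 fun a => v a i l)‖ :=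
        norm_sum_le _ _
    _ ≤ ∑ i, √(∑ a, v a i k ^ 2) * √(∑ a, v a i l ^ 2) :=
        Finset.sum_le_sum fun i _ => (norm_wedge_le _ _).trans_eq (by rw [norm_column, norm_column])
    _ ≤ _ := Real.sum_mul_le_sqrt_mul_sqrt _ _ _

theorem sum_columnMass (v : Fin 4 → Fin 4 → Fin 4 → ℝ) :
    ∑ k, columnMass v k = ∑ a, ∑ i, ∑ k, v a i k * v a i k := by
  simp only [columnMass, sq]
  rw [Finset.sum_comm]
  exact Finset.sum_congr rfl fun a _ => Finset.sum_comm

theorem mul_mul_mul_le_sq_avg (a b c d : ℝ) :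
    a * b * c * d ≤ ((a ^ 2 + b ^ 2 + c ^ 2 + d ^ 2) / 4) ^ 2 := by
  nlinarith [sq_nonneg (a - b), sq_nonneg (a + b), sq_nonneg (c - d), sq_nonneg (c + d),
    sq_nonneg (a ^ 2 + b ^ 2 - c ^ 2 - d ^ 2), mul_nonneg (sq_nonneg (a - b)) (sq_nonneg (c + d)),
    mul_nonneg (sq_nonneg (a + b)) (sq_nonneg (c - d))]

theorem stmt_2 (v : Fin 4 → (Fin 4 → Fin 4 → ℝ))
    (hv : ∀ a b, (∑ i : Fin 4, ∑ k : Fin 4, v a i k * v b i k) = if a = b then 1 else 0) :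
    |estar (v 0) (v 1) (v 2) (v 3)| ≤ 3 / (2 * Real.pi ^ 2) := by
  set s : Fin 4 → ℝ := fun k => √(columnMass v k)
  have hprod : s 0 * s 1 * s 2 * s 3 ≤ 1 := by
    have total : ∑ k, s k ^ 2 = 4 := by
      simp [s, sq_sqrt (show 0 ≤ columnMass v _ by unfold columnMass; positivity),
        sum_columnMass, hv]
    rw [Fin.sum_univ_four] at total
    simpa [total] using mul_mul_mul_le_sq_avg (s 0) (s 1) (s 2) (s 3)
  have term (k l m n : Fin 4) (hkl : s k * s l * (s m * s n) = s 0 * s 1 * s 2 * s 3) :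
      |w22 (Omst k l) (Omst m n) (v 0) (v 1) (v 2) (v 3)| ≤ 1 :=
    calc _ ≤ ‖bivector (Omst k l) v‖ * ‖bivector (Omst m n) v‖ := abs_w22_le _ _ v
      _ ≤ s k * s l * (s m * s n) := mul_le_mul (norm_bivector_Omst_le k l v)
          (norm_bivector_Omst_le m n v) (norm_nonneg _) (by positivity)
      _ ≤ 1 := hkl.trans_le hprod
  have h₁ := abs_le.mp (term 0 1 2 3 (by ring))
  have h₂ := abs_le.mp (term 0 2 1 3 (by ring))
  have h₃ := abs_le.mp (term 0 3 1 2 (by ring))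
  rw [estar, abs_mul, abs_of_pos (by positivity), one_div_mul_eq_div]
  gcongr
  exact abs_le.mpr ⟨by linarith, by linarith⟩
end

section
/- Let i₁, i₂, i₃, i₄ ∈ {1,2,3,4} and k₁, k₂, k₃, k₄ ∈ {1,2,3,4}. If the multiset {k₁,k₂,k₃,k₄} is not equal to {1,2,3,4}, or if the multiset {i₁,i₂,i₃,i₄} is neither of the form {i,i,i,i} (all four equal) nor of the form {i,i,j,j} (two pairs of values), then e*(E_{i₁ k₁}, E_{i₂ k₂}, E_{i₃ k₃}, E_{i₄ k₄}) = 0. -/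
/-- standard basis matrix `E i k`. -/
noncomputable def Emat (i k : Fin 4) : Fin 4 → Fin 4 → ℝ :=
  fun a b => if a = i ∧ b = k then 1 else 0

/-! ### Auxiliary machinery -/

/-- Integer version of the standard basis matrix. -/
def EmatZ (i k a b : Fin 4) : ℤ := if a = i ∧ b = k then 1 else 0

/-- Integer version of `Omst` evaluated on two basis matrices. -/
def omstZ (kk ll i a j b : Fin 4) : ℤ :=
  ∑ m : Fin 4, (EmatZ i a m kk * EmatZ j b m ll - EmatZ i a m ll * EmatZ j b m kk)

/-- Closed form for `omstZ`. -/
def om (kk ll i a j b : Fin 4) : ℤ :=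
  if i = j then (if a = kk ∧ b = ll then 1 else 0) - (if a = ll ∧ b = kk then 1 else 0) else 0

lemma omst_emat_cast (kk ll i a j b : Fin 4) :
    Omst kk ll (Emat i a) (Emat j b) = (omstZ kk ll i a j b : ℝ) := by
  simp only [Omst, Emat, omstZ, EmatZ]
  push_cast [apply_ite]
  rfl

set_option maxRecDepth 10000 in
lemma omstZ_eq_om : omstZ = om := by
  funext kk ll i a j b
  simp only [omstZ, om, EmatZ, Fin.sum_univ_four]
  revert kk ll i a j b
  decide

lemma omst_emat (kk ll i a j b : Fin 4) :
    Omst kk ll (Emat i a) (Emat j b) = (om kk ll i a j b : ℝ) := by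
  rw [omst_emat_cast, omstZ_eq_om]

lemma om_ne {kk ll i a j b : Fin 4} (h : om kk ll i a j b ≠ 0) :
    i = j ∧ ((a = kk ∧ b = ll) ∨ (a = ll ∧ b = kk)) := by
  unfold om at h
  by_cases hij : i = j
  · refine ⟨hij, ?_⟩
    rw [if_pos hij] at h
    by_cases hP : a = kk ∧ b = ll
    · exact Or.inl hP
    · by_cases hQ : a = ll ∧ b = kk
      · exact Or.inr hQ
      · rw [if_neg hP, if_neg hQ] at h; simp at h
  · rw [if_neg hij] at h; exact absurd rfl h

lemma ms_map (p q r s : Fin 4) (hp : ({p, q, r, s} : Multiset (Fin 4)) = {0, 1, 2, 3})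
    (f : Fin 4 → Fin 4) :
    ({f 0, f 1, f 2, f 3} : Multiset (Fin 4)) = {f p, f q, f r, f s} := by
  have := congrArg (Multiset.map f) hp
  exact this.symm

lemma ms_swap12 (a b c d : Fin 4) : ({a, b, c, d} : Multiset (Fin 4)) = {b, a, c, d} :=
  Multiset.cons_swap a b _

lemma ms_swap34 (a b c d : Fin 4) : ({a, b, c, d} : Multiset (Fin 4)) = {a, b, d, c} :=
  congrArg (a ::ₘ ·) (congrArg (b ::ₘ ·) (Multiset.cons_swap c d _))

lemma term_zero (i k : Fin 4 → Fin 4)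
    (h : ({k 0, k 1, k 2, k 3} : Multiset (Fin 4)) ≠ ({0, 1, 2, 3} : Multiset (Fin 4)) ∨
      ¬ ((∃ x : Fin 4, ({i 0, i 1, i 2, i 3} : Multiset (Fin 4)) = ({x, x, x, x} : Multiset (Fin 4))) ∨
         (∃ x y : Fin 4, ({i 0, i 1, i 2, i 3} : Multiset (Fin 4)) = ({x, x, y, y} : Multiset (Fin 4)))))
    (kk ll mm nn p q r s : Fin 4)
    (hk : ({kk, ll, mm, nn} : Multiset (Fin 4)) = {0, 1, 2, 3})
    (hp : ({p, q, r, s} : Multiset (Fin 4)) = {0, 1, 2, 3}) :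
    om kk ll (i p) (k p) (i q) (k q) * om mm nn (i r) (k r) (i s) (k s) = 0 := by
  by_contra hT
  have h1 := om_ne (left_ne_zero_of_mul hT)
  have h2 := om_ne (right_ne_zero_of_mul hT)
  rcases h with h | h
  · apply h
    rw [ms_map p q r s hp k]
    rcases h1.2 with ⟨e1, e2⟩ | ⟨e1, e2⟩ <;> rcases h2.2 with ⟨e3, e4⟩ | ⟨e3, e4⟩ <;>
      rw [e1, e2, e3, e4] <;>
      first
        | exact hk
        | (rw [← ms_swap34]; exact hk)
        | (rw [← ms_swap12]; exact hk)
        | (rw [← ms_swap12, ← ms_swap34]; exact hk)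
  · apply h
    right
    refine ⟨i p, i r, ?_⟩
    rw [ms_map p q r s hp i, ← h1.1, ← h2.1]

theorem stmt_6 (i k : Fin 4 → Fin 4)
    (h : ({k 0, k 1, k 2, k 3} : Multiset (Fin 4)) ≠ ({0, 1, 2, 3} : Multiset (Fin 4)) ∨
      ¬ ((∃ x : Fin 4, ({i 0, i 1, i 2, i 3} : Multiset (Fin 4)) = ({x, x, x, x} : Multiset (Fin 4))) ∨
         (∃ x y : Fin 4, ({i 0, i 1, i 2, i 3} : Multiset (Fin 4)) = ({x, x, y, y} : Multiset (Fin 4))))) :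
    estar (Emat (i 0) (k 0)) (Emat (i 1) (k 1)) (Emat (i 2) (k 2)) (Emat (i 3) (k 3)) = 0 := by
  have T := term_zero i k h
  have cast0 : ∀ a b : ℤ, a * b = 0 → (a : ℝ) * (b : ℝ) = 0 := by
    intro a b hab
    rw [← Int.cast_mul, hab, Int.cast_zero]
  simp only [estar, w22, omst_emat]
  rw [cast0 _ _ (T 0 1 2 3 0 1 2 3 (by decide) (by decide)),
      cast0 _ _ (T 0 1 2 3 0 2 1 3 (by decide) (by decide)),
      cast0 _ _ (T 0 1 2 3 0 3 1 2 (by decide) (by decide)),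
      cast0 _ _ (T 0 1 2 3 1 2 0 3 (by decide) (by decide)),
      cast0 _ _ (T 0 1 2 3 1 3 0 2 (by decide) (by decide)),
      cast0 _ _ (T 0 1 2 3 2 3 0 1 (by decide) (by decide)),
      cast0 _ _ (T 0 2 1 3 0 1 2 3 (by decide) (by decide)),
      cast0 _ _ (T 0 2 1 3 0 2 1 3 (by decide) (by decide)),
      cast0 _ _ (T 0 2 1 3 0 3 1 2 (by decide) (by decide)),
      cast0 _ _ (T 0 2 1 3 1 2 0 3 (by decide) (by decide)),
      cast0 _ _ (T 0 2 1 3 1 3 0 2 (by decide) (by decide)),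
      cast0 _ _ (T 0 2 1 3 2 3 0 1 (by decide) (by decide)),
      cast0 _ _ (T 0 3 1 2 0 1 2 3 (by decide) (by decide)),
      cast0 _ _ (T 0 3 1 2 0 2 1 3 (by decide) (by decide)),
      cast0 _ _ (T 0 3 1 2 0 3 1 2 (by decide) (by decide)),
      cast0 _ _ (T 0 3 1 2 1 2 0 3 (by decide) (by decide)),
      cast0 _ _ (T 0 3 1 2 1 3 0 2 (by decide) (by decide)),
      cast0 _ _ (T 0 3 1 2 2 3 0 1 (by decide) (by decide))]
  ring
end

section
/- For any orthonormal vectors v₁, …, v_{2n} ∈ V (so that ξ = v₁ ∧ ⋯ ∧ v_{2n} is a decomposable unit 2n-vector), one has (ξ_{1,1,…,1} + ξ_{2,2,…,2})² ≤ 1, where ξ_{1,…,1} and ξ_{2,…,2} are the Plücker coordinates with all row indices equal to 1, respectively all equal to 2. -/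
/-!
Write `c j` for the squared norm of the first row of `v j`, so that `1 - c j` is the squared
norm of its second row. The two coordinates are determinants whose `j`-th columns are these
rows, so by Hadamard's inequality `ξ_{1…1}² ≤ ∏ c j` and `ξ_{2…2}² ≤ ∏ (1 - c j)`. All factors
lie in `[0, 1]`, so keeping only two of them, `a` and `b`, gives
`|ξ_{1…1}| + |ξ_{2…2}| ≤ √(ab) + √((1 - a)(1 - b)) ≤ 1` by Cauchy–Schwarz.
-/

/-- Plücker coordinate `ξ_{i₁,…,i_{2n}} := det M`, `M_{ab} = (v_b)_{i_a, a}`. -/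
noncomputable def xi (n : ℕ) (v : Fin (2 * n) → (Fin 2 → Fin (2 * n) → ℝ))
    (i : Fin (2 * n) → Fin 2) : ℝ :=
  Matrix.det (Matrix.of fun a b => v b (i a) a)

theorem Matrix.abs_det_le_prod_norm_col {m : ℕ} (M : Matrix (Fin m) (Fin m) ℝ) :
    |M.det| ≤ ∏ j, ‖WithLp.toLp 2 fun i => M i j‖ := by
  let b := EuclideanSpace.basisFun (Fin m) ℝ
  have : Fact (Module.finrank ℝ (EuclideanSpace ℝ (Fin m)) = m) := ⟨by simp⟩
  have hvol := b.toBasis.orientation.volumeForm_robust b rfl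
  have hdet : b.toBasis.det (fun j => WithLp.toLp 2 fun i => M i j) = M.det := by
    rw [Module.Basis.det_apply]
    rfl
  simpa [← hdet, hvol] using b.toBasis.orientation.abs_volumeForm_apply_le _

theorem Matrix.det_sq_le_prod_sum_sq_col {m : ℕ} (M : Matrix (Fin m) (Fin m) ℝ) :
    M.det ^ 2 ≤ ∏ j, ∑ i, M i j ^ 2 := by
  calc M.det ^ 2 = |M.det| ^ 2 := (sq_abs _).symm
    _ ≤ (∏ j, ‖WithLp.toLp 2 fun i => M i j‖) ^ 2 := by
      gcongr; exact M.abs_det_le_prod_norm_col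
    _ = ∏ j, ∑ i, M i j ^ 2 := by
      simp_rw [← Finset.prod_pow, EuclideanSpace.real_norm_sq_eq]

theorem Finset.prod_le_mul_of_nonneg_of_le_one {ι : Type*} [Fintype ι] {f : ι → ℝ}
    (hf0 : ∀ k, 0 ≤ f k) (hf1 : ∀ k, f k ≤ 1) {i j : ι} (hij : i ≠ j) :
    ∏ k, f k ≤ f i * f j := by
  classical
  rw [← Finset.prod_pair hij]
  exact Finset.prod_le_prod_of_subset_of_le_one (Finset.subset_univ _) (fun k _ => hf0 k)
    fun k _ _ => hf1 k

theorem sq_add_le_one_of_sq_le_mul {x y a b : ℝ} (ha0 : 0 ≤ a) (ha1 : a ≤ 1) (hb0 : 0 ≤ b)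
    (hb1 : b ≤ 1) (hx : x ^ 2 ≤ a * b) (hy : y ^ 2 ≤ (1 - a) * (1 - b)) :
    (x + y) ^ 2 ≤ 1 := by
  have hxy : 2 * x * y ≤ a * (1 - b) + b * (1 - a) := by
    refine le_of_sq_le_sq ?_ (by positivity)
    calc (2 * x * y) ^ 2 = 4 * x ^ 2 * y ^ 2 := by ring
      _ ≤ 4 * (a * b) * ((1 - a) * (1 - b)) := by gcongr
      _ ≤ (a * (1 - b) + b * (1 - a)) ^ 2 := by nlinarith [sq_nonneg (a * (1 - b) - b * (1 - a))]
  nlinarith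

theorem xi_const_sq_le_prod (n : ℕ) (v : Fin (2 * n) → (Fin 2 → Fin (2 * n) → ℝ)) (r : Fin 2) :
    xi n v (fun _ => r) ^ 2 ≤ ∏ j, ∑ k, v j r k ^ 2 :=
  Matrix.det_sq_le_prod_sum_sq_col _

theorem stmt_12 (n : ℕ) (hn : 1 ≤ n) (v : Fin (2 * n) → (Fin 2 → Fin (2 * n) → ℝ))
    (hv : ∀ a b, (∑ i : Fin 2, ∑ k : Fin (2 * n), v a i k * v b i k) = if a = b then 1 else 0) :
    (xi n v (fun _ => 0) + xi n v (fun _ => 1)) ^ 2 ≤ 1 := by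
  set c : Fin (2 * n) → ℝ := fun j => ∑ k, v j 0 k ^ 2
  have hc : ∀ j, ∑ k, v j 1 k ^ 2 = 1 - c j := fun j => by
    have := hv j j
    simp only [Fin.sum_univ_two, if_true, ← sq] at this
    simp only [c]; linarith
  have hc0 : ∀ j, 0 ≤ c j := fun j => by positivity
  have hc1 : ∀ j, c j ≤ 1 := fun j => by
    have : 0 ≤ ∑ k, v j 1 k ^ 2 := by positivity
    linarith [hc j]
  obtain ⟨j₀, j₁, h01⟩ : ∃ j₀ j₁ : Fin (2 * n), j₀ ≠ j₁ :=
    ⟨⟨0, by omega⟩, ⟨1, by omega⟩, by simp⟩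
  refine sq_add_le_one_of_sq_le_mul (hc0 j₀) (hc1 j₀) (hc0 j₁) (hc1 j₁) ?_ ?_
  · exact (xi_const_sq_le_prod n v 0).trans
      (Finset.prod_le_mul_of_nonneg_of_le_one hc0 hc1 h01)
  · refine (xi_const_sq_le_prod n v 1).trans ?_
    simp only [hc]
    exact Finset.prod_le_mul_of_nonneg_of_le_one (fun j => by linarith [hc1 j])
      (fun j => by linarith [hc0 j]) h01
end
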